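/- arXiv:2205.07818 — 2 statements merged into one kernel-verified Lean document; each statement's English description precedes it below -/
import Mathlib

section
/- Let (A_ι)_{ι∈I} be a family of n×n symmetric matrices all of whose eigenvalues lie in [λ, Λ] with 0 < λ ≤ Λ, and define F(X) = inf_{ι∈I} tr(A_ι X) + ∑_{i=1}^n arctan(1 + e_i(X)), where e_i(X) are the eigenvalues of X. Then for every symmetric matrix X, the recession limit lim_{τ→0⁺} τ F(X/τ) exists and equals F♯(X) = inf_{ι∈I} tr(A_ι X). In particular the (neither convex nor concave) operator F has a concave recession operator. -/
noncomputable def eigs {n : ℕ} (X : Matrix (Fin n) (Fin n) ℝ) : Fin n → ℝ :=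
  if h : X.IsHermitian then h.eigenvalues else 0

noncomputable def pucciSup {n : ℕ} (lam Lam : ℝ) (X : Matrix (Fin n) (Fin n) ℝ) : ℝ :=
  Lam * ∑ i, max (eigs X i) 0 + lam * ∑ i, min (eigs X i) 0

noncomputable def pucciInf {n : ℕ} (lam Lam : ℝ) (X : Matrix (Fin n) (Fin n) ℝ) : ℝ :=
  lam * ∑ i, max (eigs X i) 0 + Lam * ∑ i, min (eigs X i) 0

noncomputable def trNorm {n : ℕ} (X : Matrix (Fin n) (Fin n) ℝ) : ℝ := ∑ i, |eigs X i|

noncomputable def opN {n : ℕ} (X : Matrix (Fin n) (Fin n) ℝ) : ℝ := ⨆ i, |eigs X i|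

/-! Homogeneity makes `τ · F(τ⁻¹ X) = inf_ι tr(A_ι X) + τ · ∑ arctan(1 + e_i(τ⁻¹ X))`, and the
arctan sum is bounded by `n π / 2`, so the second term vanishes as `τ → 0⁺`. An infimum of linear
maps is concave provided it is finite; here `λ • 1 ≤ A_ι ≤ Λ • 1` bounds the entries of all `A_ι`
uniformly, which keeps the infimum bounded below (otherwise `⨅` on `ℝ` would take the junk
value `0`). -/

open Filter Topology Set Real

namespace Matrix

variable {m : Type*} [Fintype m]

theorem PosSemidef.two_mul_abs_apply_le [DecidableEq m] {M : Matrix m m ℝ} (hM : M.PosSemidef)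
    (i j : m) : 2 * |M i j| ≤ M i i + M j j := by
  have hsymm : M j i = M i j := by simpa using congrFun (congrFun hM.isHermitian i) j
  have hquad (s : ℝ) : 0 ≤ M i i + 2 * s * M i j + s ^ 2 * M j j := by
    have := hM.dotProduct_mulVec_nonneg (Pi.single i 1 + Pi.single j s)
    simp only [star_trivial, add_dotProduct, single_dotProduct, one_mul, mulVec_add,
      mulVec_single, MulOpposite.op_one, one_smul, op_smul_eq_smul, Pi.add_apply, col_apply,
      Pi.smul_apply, smul_eq_mul, hsymm] at this
    linarith
  rcases abs_cases (M i j) with ⟨h, _⟩ | ⟨h, _⟩ <;> rw [h] <;> nlinarith [hquad 1, hquad (-1)]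

theorem abs_apply_le_of_posSemidef_of_posSemidef_smul_one_sub [DecidableEq m]
    {B : Matrix m m ℝ} {c : ℝ} (hB : B.PosSemidef) (hcB : (c • 1 - B).PosSemidef) (i j : m) :
    |B i j| ≤ c := by
  have hdiag (k : m) : B k k ≤ c := by
    simpa using (hcB.diag_nonneg (i := k))
  linarith [hB.two_mul_abs_apply_le i j, hdiag i, hdiag j]

theorem abs_apply_le_of_posSemidef_sub_smul_one [DecidableEq m] {M : Matrix m m ℝ} {lo hi : ℝ}
    (hlo : (M - lo • 1).PosSemidef) (hhi : (hi • 1 - M).PosSemidef) (i j : m) :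
    |M i j| ≤ hi - lo + |lo| := by
  have hshift : (hi - lo) • (1 : Matrix m m ℝ) - (M - lo • 1) = hi • 1 - M := by
    rw [sub_smul]; abel
  have hB := abs_apply_le_of_posSemidef_of_posSemidef_smul_one_sub hlo (hshift ▸ hhi) i j
  have hone : |(lo • (1 : Matrix m m ℝ)) i j| ≤ |lo| := by
    rcases eq_or_ne i j with rfl | hij <;> simp [*]
  calc |M i j| = |(M - lo • 1) i j + (lo • (1 : Matrix m m ℝ)) i j| := by simp
    _ ≤ |(M - lo • 1) i j| + |(lo • (1 : Matrix m m ℝ)) i j| := abs_add_le _ _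
    _ ≤ hi - lo + |lo| := add_le_add hB hone

theorem abs_trace_mul_le {M X : Matrix m m ℝ} {c : ℝ} (hM : ∀ i j, |M i j| ≤ c) :
    |(M * X).trace| ≤ c * ∑ i, ∑ j, |X i j| := by
  calc |(M * X).trace| = |∑ i, ∑ j, M i j * X j i| := by simp [trace, mul_apply]
    _ ≤ ∑ i, ∑ j, |M i j * X j i| :=
        (Finset.abs_sum_le_sum_abs _ _).trans
          (Finset.sum_le_sum fun i _ => Finset.abs_sum_le_sum_abs _ _)
    _ ≤ ∑ i, ∑ j, c * |X j i| := by
        gcongr with i _ j _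
        rw [abs_mul]
        exact mul_le_mul_of_nonneg_right (hM i j) (abs_nonneg _)
    _ = c * ∑ i, ∑ j, |X i j| := by
        rw [Finset.sum_comm, Finset.mul_sum]
        simp only [Finset.mul_sum]

theorem bddBelow_range_trace_mul {ι : Type*} {M : ι → Matrix m m ℝ} {c : ℝ}
    (hM : ∀ k i j, |M k i j| ≤ c) (X : Matrix m m ℝ) :
    BddBelow (range fun k => (M k * X).trace) :=
  ⟨-(c * ∑ i, ∑ j, |X i j|), by
    rintro _ ⟨k, rfl⟩
    exact neg_le_of_abs_le (abs_trace_mul_le (hM k))⟩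

theorem iInf_trace_mul_smul {ι : Type*} (M : ι → Matrix m m ℝ) {t : ℝ} (ht : 0 ≤ t)
    (X : Matrix m m ℝ) : ⨅ k, (M k * (t • X)).trace = t * ⨅ k, (M k * X).trace := by
  simp only [Matrix.mul_smul, trace_smul, smul_eq_mul, Real.mul_iInf_of_nonneg ht]

theorem concaveOn_trace_mul (M : Matrix m m ℝ) :
    ConcaveOn ℝ univ fun X : Matrix m m ℝ => (M * X).trace :=
  ((traceLinearMap m ℝ ℝ).comp (LinearMap.mulLeft ℝ M)).concaveOn convex_univ

end Matrix

theorem ConcaveOn.ciInf {ι E : Type*} [Nonempty ι] [AddCommMonoid E] [Module ℝ E] {s : Set E}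
    {f : ι → E → ℝ} (hf : ∀ k, ConcaveOn ℝ s (f k))
    (hbdd : ∀ x ∈ s, BddBelow (range fun k => f k x)) :
    ConcaveOn ℝ s fun x => ⨅ k, f k x := by
  refine ⟨(hf (Classical.arbitrary ι)).1, fun x hx y hy a b ha hb hab => le_ciInf fun k => ?_⟩
  calc a • (⨅ k, f k x) + b • ⨅ k, f k y ≤ a • f k x + b • f k y := by
        gcongr
        exacts [ciInf_le (hbdd x hx) k, ciInf_le (hbdd y hy) k]
    _ ≤ f k (a • x + b • y) := (hf k).2 hx hy ha hb hab

theorem Real.abs_sum_arctan_le {ι : Type*} [Fintype ι] (f : ι → ℝ) :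
    |∑ i, arctan (f i)| ≤ Fintype.card ι * (π / 2) := by
  calc |∑ i, arctan (f i)| ≤ ∑ i, |arctan (f i)| := Finset.abs_sum_le_sum_abs _ _
    _ ≤ ∑ _i : ι, π / 2 := by
        gcongr with i
        exact abs_le.mpr ⟨(neg_pi_div_two_lt_arctan _).le, (arctan_lt_pi_div_two _).le⟩
    _ = Fintype.card ι * (π / 2) := by simp

theorem tendsto_mul_add_bounded_of_homogeneous {E : Type*} [AddCommGroup E] [Module ℝ E]
    {G g : E → ℝ} (hG : ∀ t > 0, ∀ X, G (t • X) = t * G X) {C : ℝ} (hg : ∀ Y, |g Y| ≤ C)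
    (X : E) :
    Tendsto (fun τ : ℝ => τ * (G (τ⁻¹ • X) + g (τ⁻¹ • X))) (𝓝[>] 0) (𝓝 (G X)) := by
  have hpert : Tendsto (fun τ : ℝ => τ * g (τ⁻¹ • X)) (𝓝[>] 0) (𝓝 0) :=
    (tendsto_nhdsWithin_of_tendsto_nhds tendsto_id).zero_mul_isBoundedUnder_le
      (isBoundedUnder_of ⟨C, fun τ => by simpa using hg (τ⁻¹ • X)⟩)
  refine (by simpa using hpert.const_add (G X) : Tendsto _ _ (𝓝 (G X))).congr' ?_
  filter_upwards [self_mem_nhdsWithin] with τ (hτ : 0 < τ)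
  rw [mul_add, hG _ (inv_pos.mpr hτ), mul_inv_cancel_left₀ hτ.ne']

theorem stmt5_general {n : ℕ} {I : Type*} [Nonempty I] (lam Lam : ℝ)
    (A : I → Matrix (Fin n) (Fin n) ℝ)
    (hA : ∀ ι : I, (A ι).IsHermitian ∧
      (A ι - lam • (1 : Matrix (Fin n) (Fin n) ℝ)).PosSemidef ∧
      (Lam • (1 : Matrix (Fin n) (Fin n) ℝ) - A ι).PosSemidef) :
    (∀ X : Matrix (Fin n) (Fin n) ℝ, X.IsHermitian →
      Filter.Tendsto (fun τ : ℝ => τ *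
          ((⨅ ι : I, (A ι * (τ⁻¹ • X)).trace) + ∑ i, Real.arctan (1 + eigs (τ⁻¹ • X) i)))
        (nhdsWithin 0 (Set.Ioi 0)) (nhds (⨅ ι : I, (A ι * X).trace))) ∧
    ConcaveOn ℝ Set.univ (fun X : Matrix (Fin n) (Fin n) ℝ => ⨅ ι : I, (A ι * X).trace) := by
  have hentries : ∀ ι i j, |A ι i j| ≤ Lam - lam + |lam| := fun ι =>
    Matrix.abs_apply_le_of_posSemidef_sub_smul_one (hA ι).2.1 (hA ι).2.2
  refine ⟨fun X _ => ?_, ?_⟩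
  · exact (tendsto_mul_add_bounded_of_homogeneous (G := fun X => ⨅ ι, (A ι * X).trace)
      (fun t ht => Matrix.iInf_trace_mul_smul A ht.le)
      (fun Y => Real.abs_sum_arctan_le fun i => 1 + eigs Y i) X :)
  · exact ConcaveOn.ciInf (fun ι => Matrix.concaveOn_trace_mul (A ι))
      (fun X _ => Matrix.bddBelow_range_trace_mul hentries X)

/-- Perturbed Bellman operator: recession of
F(X) = inf_ι tr(A_ι X) + ∑ arctan(1 + e_i(X)) is the concave operator inf_ι tr(A_ι X). -/
theorem stmt5 {n : ℕ} {I : Type*} [Nonempty I] (lam Lam : ℝ) (h0 : 0 < lam) (h1 : lam ≤ Lam)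
    (A : I → Matrix (Fin n) (Fin n) ℝ)
    (hA : ∀ ι : I, (A ι).IsHermitian ∧
      (A ι - lam • (1 : Matrix (Fin n) (Fin n) ℝ)).PosSemidef ∧
      (Lam • (1 : Matrix (Fin n) (Fin n) ℝ) - A ι).PosSemidef) :
    (∀ X : Matrix (Fin n) (Fin n) ℝ, X.IsHermitian →
      Filter.Tendsto (fun τ : ℝ => τ *
          ((⨅ ι : I, (A ι * (τ⁻¹ • X)).trace) + ∑ i, Real.arctan (1 + eigs (τ⁻¹ • X) i)))
        (nhdsWithin 0 (Set.Ioi 0)) (nhds (⨅ ι : I, (A ι * X).trace))) ∧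
    ConcaveOn ℝ Set.univ (fun X : Matrix (Fin n) (Fin n) ℝ => ⨅ ι : I, (A ι * X).trace) :=
  stmt5_general lam Lam A hA
end

section
/- Let 0 < δ < λ ≤ Λ, let F : Sym(n) → ℝ satisfy F(0) = 0 and P⁻_{λ,Λ}(X−Y) ≤ F(X) − F(Y) ≤ P⁺_{λ,Λ}(X−Y) for all symmetric X, Y, and for j ∈ ℕ set C_j = j(2Λ − λ + δ) and F_j(X) = max{ F(X), L_δ(X) − C_j } with L_δ = P⁺_{λ−δ,Λ+δ}. Then: (i) F_j(X) = F(X) whenever ‖X‖ ≤ j (trace norm); and (ii) the recession operator of F_j is L_δ, i.e. lim_{τ→0⁺} τ F_j(X/τ) = L_δ(X) for every symmetric X. -/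
/-! Since `F 0 = 0`, ellipticity traps `F` between `P⁻_{λ,Λ}` and `P⁺_{λ,Λ}`. On the trace-norm
ball of radius `j`, `L_δ - P⁻_{λ,Λ} = (Λ - λ + δ)‖X‖ ≤ C_j`, so the maximum defining `F_j` is `F`.
By positive homogeneity of the Pucci operators,
`τ F_j(X/τ) = max (τ F(X/τ)) (L_δ X - τ C_j)`, and `τ F(X/τ) ≤ P⁺_{λ,Λ} X ≤ L_δ X`, so this is
squeezed between `L_δ X - τ C_j` and `max (L_δ X) (L_δ X - τ C_j)`, both tending to `L_δ X`. -/

open Polynomial Matrix Filter Topology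

lemma Matrix.IsHermitian.charpoly_smul {ι : Type*} [Fintype ι] [DecidableEq ι]
    {A : Matrix ι ι ℝ} (hA : A.IsHermitian) (c : ℝ) :
    (c • A).charpoly = ∏ i, (X - C (c * hA.eigenvalues i)) := by
  conv_lhs => rw [hA.spectral_theorem, Unitary.conjStarAlgAut_apply, ← Matrix.smul_mul,
    ← Matrix.mul_smul, charpoly_mul_comm, ← mul_assoc, Unitary.coe_star_mul_self, one_mul]
  rw [← diagonal_smul, charpoly_diagonal]
  rfl

/-- Only as multisets: the indexing of `eigenvalues` need not be compatible with scaling. -/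
lemma Matrix.IsHermitian.map_eigenvalues_smul {ι : Type*} [Fintype ι] [DecidableEq ι]
    {A : Matrix ι ι ℝ} (hA : A.IsHermitian) (c : ℝ) :
    Finset.univ.val.map (hA.smul (IsSelfAdjoint.all c)).eigenvalues =
      Finset.univ.val.map (fun i => c * hA.eigenvalues i) := by
  have h := (hA.smul (IsSelfAdjoint.all c)).roots_charpoly_eq_eigenvalues
  have hroots := roots_multiset_prod_X_sub_C (Finset.univ.val.map fun i => c * hA.eigenvalues i)
  rw [Multiset.map_map] at hroots
  rw [hA.charpoly_smul, Finset.prod_eq_multiset_prod] at h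
  exact h.symm.trans hroots

lemma eigs_of_isHermitian {n : ℕ} {A : Matrix (Fin n) (Fin n) ℝ} (hA : A.IsHermitian) :
    eigs A = hA.eigenvalues :=
  dif_pos hA

lemma sum_eigs_smul {n : ℕ} {A : Matrix (Fin n) (Fin n) ℝ} (hA : A.IsHermitian) (c : ℝ)
    (g : ℝ → ℝ) : ∑ i, g (eigs (c • A) i) = ∑ i, g (c * eigs A i) := by
  have h := congrArg (fun m => (m.map g).sum) (hA.map_eigenvalues_smul c)
  simpa only [Multiset.map_map, Function.comp_def, ← Finset.sum_eq_multiset_sum,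
    eigs_of_isHermitian hA, eigs_of_isHermitian (hA.smul (IsSelfAdjoint.all c))] using h

lemma pucciSup_smul {n : ℕ} (lam Lam : ℝ) {c : ℝ} (hc : 0 ≤ c) {A : Matrix (Fin n) (Fin n) ℝ}
    (hA : A.IsHermitian) : pucciSup lam Lam (c • A) = c * pucciSup lam Lam A := by
  rw [pucciSup, pucciSup, sum_eigs_smul hA c (max · 0), sum_eigs_smul hA c (min · 0)]
  have hmax (x : ℝ) : max (c * x) 0 = c * max x 0 := by rw [mul_max_of_nonneg _ _ hc, mul_zero]
  have hmin (x : ℝ) : min (c * x) 0 = c * min x 0 := by rw [mul_min_of_nonneg _ _ hc, mul_zero]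
  simp only [hmax, hmin, ← Finset.mul_sum]
  ring

lemma pucciSup_le_pucciSup {n : ℕ} {lam lam' Lam Lam' : ℝ} (hlam : lam' ≤ lam)
    (hLam : Lam ≤ Lam') (X : Matrix (Fin n) (Fin n) ℝ) :
    pucciSup lam Lam X ≤ pucciSup lam' Lam' X := by
  have hpos : 0 ≤ ∑ i, max (eigs X i) 0 := Finset.sum_nonneg fun _ _ => le_max_right _ _
  have hneg : ∑ i, min (eigs X i) 0 ≤ 0 := Finset.sum_nonpos fun _ _ => min_le_right _ _
  unfold pucciSup
  nlinarith

lemma trNorm_nonneg {n : ℕ} (X : Matrix (Fin n) (Fin n) ℝ) : 0 ≤ trNorm X :=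
  Finset.sum_nonneg fun _ _ => abs_nonneg _

lemma trNorm_eq_sum_max_sub_sum_min {n : ℕ} (X : Matrix (Fin n) (Fin n) ℝ) :
    trNorm X = ∑ i, max (eigs X i) 0 - ∑ i, min (eigs X i) 0 := by
  rw [trNorm, ← Finset.sum_sub_distrib]
  exact Finset.sum_congr rfl fun _ _ => by rw [max_sub_min_eq_abs', sub_zero]

lemma pucciSup_sub_pucciInf {n : ℕ} (lam Lam δ : ℝ) (X : Matrix (Fin n) (Fin n) ℝ) :
    pucciSup (lam - δ) (Lam + δ) X - pucciInf lam Lam X = (Lam - lam + δ) * trNorm X := by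
  rw [pucciSup, pucciInf, trNorm_eq_sum_max_sub_sum_min]
  ring

lemma pucciSup_sub_le_pucciInf_of_trNorm_le {n : ℕ} {lam Lam δ r : ℝ} (hδ : 0 ≤ δ)
    (hlam : lam ≤ Lam) (hLam : 0 ≤ Lam) {X : Matrix (Fin n) (Fin n) ℝ} (hX : trNorm X ≤ r) :
    pucciSup (lam - δ) (Lam + δ) X - r * (2 * Lam - lam + δ) ≤ pucciInf lam Lam X := by
  have hr : 0 ≤ r := (trNorm_nonneg X).trans hX
  have := pucciSup_sub_pucciInf lam Lam δ X
  nlinarith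

lemma tendsto_mul_max_sub {a b : ℝ → ℝ} {L C : ℝ} (ha : ∀ τ > 0, τ * a τ ≤ L)
    (hb : ∀ τ > 0, b τ = τ⁻¹ * L) :
    Tendsto (fun τ => τ * max (a τ) (b τ - C)) (𝓝[>] 0) (𝓝 L) := by
  have hlow : Tendsto (fun τ : ℝ => L - τ * C) (𝓝[>] 0) (𝓝 L) := by
    have : Tendsto (fun τ : ℝ => L - τ * C) (𝓝 0) (𝓝 (L - 0 * C)) :=
      (tendsto_id.mul_const C).const_sub L
    simpa using this.mono_left nhdsWithin_le_nhds
  have hup : Tendsto (fun τ : ℝ => max L (L - τ * C)) (𝓝[>] 0) (𝓝 L) := by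
    simpa using (tendsto_const_nhds (x := L)).max hlow
  have heq : ∀ τ > 0, τ * max (a τ) (b τ - C) = max (τ * a τ) (L - τ * C) := fun τ hτ => by
    rw [hb τ hτ, mul_max_of_nonneg _ _ hτ.le, mul_sub, ← mul_assoc, mul_inv_cancel₀ hτ.ne',
      one_mul]
  refine tendsto_of_tendsto_of_tendsto_of_le_of_le' hlow hup ?_ ?_ <;>
    filter_upwards [self_mem_nhdsWithin] with τ hτ <;> rw [heq τ hτ]
  · exact le_max_right _ _
  · exact max_le_max_right _ (ha τ hτ)

theorem stmt9_general {n : ℕ} (lam Lam δ : ℝ) (h0 : 0 < lam) (h1 : lam ≤ Lam)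
    (hδ : 0 < δ)
    (F : Matrix (Fin n) (Fin n) ℝ → ℝ) (hF0 : F 0 = 0)
    (hell : ∀ X Y : Matrix (Fin n) (Fin n) ℝ, X.IsHermitian → Y.IsHermitian →
      pucciInf lam Lam (X - Y) ≤ F X - F Y ∧ F X - F Y ≤ pucciSup lam Lam (X - Y)) :
    (∀ j : ℕ, ∀ X : Matrix (Fin n) (Fin n) ℝ, X.IsHermitian → trNorm X ≤ j →
      max (F X) (pucciSup (lam - δ) (Lam + δ) X - j * (2 * Lam - lam + δ)) = F X) ∧
    (∀ j : ℕ, ∀ X : Matrix (Fin n) (Fin n) ℝ, X.IsHermitian →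
      Filter.Tendsto (fun τ : ℝ => τ * max (F (τ⁻¹ • X))
          (pucciSup (lam - δ) (Lam + δ) (τ⁻¹ • X) - j * (2 * Lam - lam + δ)))
        (nhdsWithin 0 (Set.Ioi 0)) (nhds (pucciSup (lam - δ) (Lam + δ) X))) := by
  have hbounds : ∀ X, X.IsHermitian → pucciInf lam Lam X ≤ F X ∧ F X ≤ pucciSup lam Lam X :=
    fun X hX => by simpa [hF0] using hell X 0 hX isHermitian_zero
  refine ⟨fun j X hX hXj => max_eq_left ?_, fun j X hX => tendsto_mul_max_sub ?_ ?_⟩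
  · exact (pucciSup_sub_le_pucciInf_of_trNorm_le hδ.le h1 (h0.le.trans h1) hXj).trans
      (hbounds X hX).1
  · intro τ hτ
    calc τ * F (τ⁻¹ • X) ≤ τ * pucciSup lam Lam (τ⁻¹ • X) :=
          mul_le_mul_of_nonneg_left (hbounds _ (hX.smul (IsSelfAdjoint.all _))).2 hτ.le
      _ = pucciSup lam Lam X := by
          rw [pucciSup_smul _ _ (inv_nonneg.2 hτ.le) hX, ← mul_assoc, mul_inv_cancel₀ hτ.ne',
            one_mul]
      _ ≤ pucciSup (lam - δ) (Lam + δ) X := pucciSup_le_pucciSup (by linarith) (by linarith) X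
  · exact fun τ hτ => pucciSup_smul _ _ (inv_nonneg.2 hτ.le) hX

/-- F_j = max(F, L_δ − C_j) with C_j = j(2Λ−λ+δ): F_j agrees with F on the ball of trace-norm
radius j, and its recession operator is L_δ. -/
theorem stmt9 {n : ℕ} (lam Lam δ : ℝ) (h0 : 0 < lam) (h1 : lam ≤ Lam)
    (hδ : 0 < δ) (hdl : δ < lam)
    (F : Matrix (Fin n) (Fin n) ℝ → ℝ) (hF0 : F 0 = 0)
    (hell : ∀ X Y : Matrix (Fin n) (Fin n) ℝ, X.IsHermitian → Y.IsHermitian →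
      pucciInf lam Lam (X - Y) ≤ F X - F Y ∧ F X - F Y ≤ pucciSup lam Lam (X - Y)) :
    (∀ j : ℕ, ∀ X : Matrix (Fin n) (Fin n) ℝ, X.IsHermitian → trNorm X ≤ j →
      max (F X) (pucciSup (lam - δ) (Lam + δ) X - j * (2 * Lam - lam + δ)) = F X) ∧
    (∀ j : ℕ, ∀ X : Matrix (Fin n) (Fin n) ℝ, X.IsHermitian →
      Filter.Tendsto (fun τ : ℝ => τ * max (F (τ⁻¹ • X))
          (pucciSup (lam - δ) (Lam + δ) (τ⁻¹ • X) - j * (2 * Lam - lam + δ)))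
        (nhdsWithin 0 (Set.Ioi 0)) (nhds (pucciSup (lam - δ) (Lam + δ) X))) :=
  stmt9_general lam Lam δ h0 h1 hδ F hF0 hell
end
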